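/- Let n ≥ 2 and -1 < w < 1/(n-1). The intersection of the prism Ω = {x ∈ ℝ^n : x_1 ≥ x_2 ≥ ⋯ ≥ x_n ≥ x_1 - √(1+w)} with the hyperplane {x : Σ x_i = 0} is the convex hull of the n points q_0 = 0 and q_k = √(w+1)·((n-k)/n,…,(n-k)/n, -k/n,…,-k/n) (with k entries equal to -k/n) for k = 1,…,n-1, and this (n-1)-dimensional simplex is congruent to c·P_{n-1} where c = √((n-1)(w+1)/n) and P_{n-1} := Q_{n-1}(1/(n-1)). -/

import Mathlib

/-!
Write `s = √(1 + w)` and `n = m + 1`. A point `x` of the section has nonnegative gaps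
`d₀ = s - (x₀ - xₘ)` and `dₖ = xₖ₋₁ - xₖ` summing to `s`, and `x = ∑ (dₖ / s) qₖ`: both sides have
zero coordinate sum and the same consecutive differences, since `qₖ` drops by exactly `s` between
coordinates `k - 1` and `k`. Conversely each `qₖ` lies in the convex section.

After scaling by `c`, the edge vectors of `P_m` become `s (eₖ - 𝟙 / (r (r + 1)))` with
`r = √(m + 1)`. The reflection of `ℝᵐ⁺¹` exchanging `e_last` and `-𝟙 / r`, restricted to
`ℝᵐ × 0`, maps the partial sums of these to the vertices `qₖ₊₁`.
-/

open Pointwise Finset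

lemma Fin.sum_univ_castSucc_sub_succ {M : Type*} [AddCommGroup M] {m : ℕ} (f : Fin (m + 1) → M) :
    ∑ i : Fin m, (f i.castSucc - f i.succ) = f 0 - f (Fin.last m) := by
  rw [sum_sub_distrib, sub_eq_sub_iff_add_eq_add, ← Fin.sum_univ_castSucc]
  exact Fin.sum_univ_succ f

lemma Fin.eq_of_sum_eq_of_castSucc_sub_succ_eq {K : Type*} [Field K] [CharZero K] {m : ℕ}
    {x y : Fin (m + 1) → K} (hsum : ∑ i, x i = ∑ i, y i)
    (hdiff : ∀ i : Fin m, x i.castSucc - x i.succ = y i.castSucc - y i.succ) : x = y := by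
  have hconst : ∀ i, x i - y i = x 0 - y 0 := by
    intro i
    induction i using Fin.induction with
    | zero => rfl
    | succ i ih => linear_combination ih - hdiff i
  have h0 : x 0 - y 0 = 0 := by
    have : ∑ i, (x i - y i) = (m + 1) * (x 0 - y 0) := by simp [hconst, mul_sub]
    rw [sum_sub_distrib, hsum, sub_self] at this
    exact (mul_eq_zero.1 this.symm).resolve_left (Nat.cast_add_one_ne_zero m)
  funext i
  linear_combination hconst i + h0

noncomputable def centeredStep (n : ℕ) (k : Fin n) : EuclideanSpace ℝ (Fin n) :=
  WithLp.toLp 2 fun j => (if j < k then 1 else 0) - (k : ℝ) / n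

section centeredStep

variable {n m : ℕ}

lemma centeredStep_apply (k j : Fin n) :
    centeredStep n k j = (if j < k then 1 else 0) - (k : ℝ) / n := rfl

lemma sum_centeredStep (k : Fin n) : ∑ j, centeredStep n k j = 0 := by
  have hn : (n : ℝ) ≠ 0 := by have := k.pos; positivity
  simp [centeredStep_apply, sum_sub_distrib, sum_boole, filter_gt_eq_Iio, mul_div_cancel₀ _ hn]

lemma centeredStep_antitone (k : Fin n) : Antitone (centeredStep n k).ofLp := by
  intro i j hij
  simp only [centeredStep_apply]
  gcongr ?_ - _
  by_cases hj : j < k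
  · simp [hj, hij.trans_lt hj]
  · split_ifs <;> norm_num

lemma centeredStep_zero_sub_last_le_one (k : Fin (m + 1)) :
    centeredStep (m + 1) k 0 - centeredStep (m + 1) k (Fin.last m) ≤ 1 := by
  simp only [centeredStep_apply, not_lt.2 (Fin.le_last k), if_false]
  split_ifs <;> norm_num

lemma centeredStep_castSucc_sub_succ (k : Fin (m + 1)) (i : Fin m) :
    centeredStep (m + 1) k i.castSucc - centeredStep (m + 1) k i.succ =
      if k = i.succ then 1 else 0 := by
  simp only [centeredStep_apply]
  rcases lt_trichotomy k i.succ with h | h | h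
  · have : ¬ i.castSucc < k := by rw [Fin.castSucc_lt_iff_succ_le]; exact not_le.2 h
    simp [h.ne, not_lt.2 h.le, this]
  · simp [h]
  · have : i.castSucc < k := Fin.castSucc_lt_succ.trans h
    simp [h.ne', h, this]

@[simp]
lemma centeredStep_zero : centeredStep (m + 1) 0 = 0 := by
  ext j
  simp [centeredStep_apply]

end centeredStep

def prismSection (m : ℕ) (s : ℝ) : Set (EuclideanSpace ℝ (Fin (m + 1))) :=
  {x | Antitone x.ofLp ∧ x 0 - s ≤ x (Fin.last m) ∧ ∑ i, x i = 0}

section prismSection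

variable {m : ℕ} {s : ℝ}

lemma convex_prismSection : Convex ℝ (prismSection m s) := by
  rintro x ⟨hx, hx0, hxs⟩ y ⟨hy, hy0, hys⟩ a b ha hb hab
  simp only [prismSection, Set.mem_ofPred_eq, WithLp.ofLp_add, WithLp.ofLp_smul, Pi.add_apply,
    Pi.smul_apply, smul_eq_mul, sum_add_distrib, ← mul_sum, hxs, hys]
  refine ⟨fun i j hij => ?_, ?_, by ring⟩
  · exact add_le_add (mul_le_mul_of_nonneg_left (hx hij) ha)
      (mul_le_mul_of_nonneg_left (hy hij) hb)
  · have hs : s = a * s + b * s := by rw [← add_mul, hab, one_mul]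
    linarith [mul_le_mul_of_nonneg_left hx0 ha, mul_le_mul_of_nonneg_left hy0 hb]

lemma smul_centeredStep_mem_prismSection (hs : 0 ≤ s) (k : Fin (m + 1)) :
    s • centeredStep (m + 1) k ∈ prismSection m s := by
  refine ⟨fun i j hij => ?_, ?_, ?_⟩
  · simpa using mul_le_mul_of_nonneg_left (centeredStep_antitone k hij) hs
  · have := mul_le_mul_of_nonneg_left (centeredStep_zero_sub_last_le_one k) hs
    simp only [PiLp.smul_apply, smul_eq_mul]
    linarith
  · simp [← mul_sum, sum_centeredStep]

lemma prismSection_subset_convexHull (hs : 0 < s) :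
    prismSection m s ⊆ convexHull ℝ (Set.range fun k => s • centeredStep (m + 1) k) := by
  rintro x ⟨hanti, hgap, hsum⟩
  let d : Fin (m + 1) → ℝ := Fin.cons (s - (x 0 - x (Fin.last m))) fun i => x i.castSucc - x i.succ
  have hd_nonneg : ∀ k, 0 ≤ d k := Fin.cases (by simp [d]; linarith)
    fun i => sub_nonneg.2 (hanti (Fin.castSucc_le_succ i))
  have hd_sum : ∑ k, d k = s := by
    simp only [d, Fin.sum_univ_succ, Fin.cons_zero, Fin.cons_succ, Fin.sum_univ_castSucc_sub_succ]
    ring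
  have hx : x = ∑ k, (d k / s) • (s • centeredStep (m + 1) k) := by
    simp only [smul_smul, div_mul_cancel₀ _ hs.ne']
    apply WithLp.ofLp_injective
    apply Fin.eq_of_sum_eq_of_castSucc_sub_succ_eq
    · simp [hsum, sum_comm (γ := Fin (m + 1)), ← mul_sum, sum_centeredStep]
    · intro i
      simp [← mul_sub, ← sum_sub_distrib, centeredStep_castSucc_sub_succ, d]
  rw [hx]
  exact (convex_convexHull ℝ _).sum_mem (fun k _ => div_nonneg (hd_nonneg k) hs.le)
    (by rw [← sum_div, hd_sum, div_self hs.ne'])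
    fun k _ => subset_convexHull ℝ _ (Set.mem_range_self k)

lemma prismSection_eq_convexHull (hs : 0 < s) :
    prismSection m s = convexHull ℝ (Set.range fun k => s • centeredStep (m + 1) k) :=
  (prismSection_subset_convexHull hs).antisymm <| convexHull_min
    (Set.range_subset_iff.2 (smul_centeredStep_mem_prismSection hs.le)) convex_prismSection

end prismSection

/-- The inclusion `y ↦ (y, 0)` followed by the reflection of `ℝᵐ⁺¹` exchanging `e_last` and
`-𝟙 / √(m+1)`; it maps `ℝᵐ` isometrically onto the hyperplane `∑ xᵢ = 0`. -/
noncomputable def sumZeroEmbedding (m : ℕ) :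
    EuclideanSpace ℝ (Fin m) →ₗ[ℝ] EuclideanSpace ℝ (Fin (m + 1)) where
  toFun y := WithLp.toLp 2 <| Fin.snoc
    (fun j => y j - (∑ i, y i) / (√(m + 1) * (√(m + 1) + 1))) (-(∑ i, y i) / √(m + 1))
  map_add' y z := by
    ext j
    induction j using Fin.lastCases <;> simp [sum_add_distrib] <;> ring
  map_smul' a y := by
    ext j
    induction j using Fin.lastCases <;> simp [← mul_sum] <;> ring

section sumZeroEmbedding

variable {m : ℕ}

@[simp]
lemma sumZeroEmbedding_apply_castSucc (y : EuclideanSpace ℝ (Fin m)) (j : Fin m) :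
    sumZeroEmbedding m y j.castSucc = y j - (∑ i, y i) / (√(m + 1) * (√(m + 1) + 1)) := by
  simp [sumZeroEmbedding]

@[simp]
lemma sumZeroEmbedding_apply_last (y : EuclideanSpace ℝ (Fin m)) :
    sumZeroEmbedding m y (Fin.last m) = -(∑ i, y i) / √(m + 1) := by
  simp [sumZeroEmbedding]

lemma norm_sumZeroEmbedding (y : EuclideanSpace ℝ (Fin m)) : ‖sumZeroEmbedding m y‖ = ‖y‖ := by
  have hr2 : √((m : ℝ) + 1) ^ 2 = m + 1 := Real.sq_sqrt (by positivity)
  rw [← sq_eq_sq₀ (norm_nonneg _) (norm_nonneg _), EuclideanSpace.real_norm_sq_eq,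
    EuclideanSpace.real_norm_sq_eq, Fin.sum_univ_castSucc]
  simp only [sumZeroEmbedding_apply_castSucc, sumZeroEmbedding_apply_last, sub_sq,
    sum_add_distrib, sum_sub_distrib, ← sum_mul, sum_const, card_univ, Fintype.card_fin,
    nsmul_eq_mul, ← mul_sum]
  field_simp
  linear_combination -(∑ i, y i) ^ 2 * hr2

lemma isometry_sumZeroEmbedding : Isometry (sumZeroEmbedding m) :=
  AddMonoidHomClass.isometry_of_norm _ norm_sumZeroEmbedding

lemma sumZeroEmbedding_stair (i : Fin m) :
    sumZeroEmbedding m (WithLp.toLp 2 fun j =>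
        (if j ≤ i then 1 else 0) - (i + 1 : ℝ) / (√(m + 1) * (√(m + 1) + 1))) =
      centeredStep (m + 1) i.succ := by
  set r := √((m : ℝ) + 1)
  have hr : 0 < r := by positivity
  have hr2 : r ^ 2 = m + 1 := Real.sq_sqrt (by positivity)
  have hsum :
      ∑ j : Fin m, ((if j ≤ i then 1 else 0) - (i + 1 : ℝ) / (r * (r + 1))) = (i + 1) / r := by
    simp only [sum_sub_distrib, sum_boole, filter_ge_eq_Iic, Fin.card_Iic, Nat.cast_add,
      Nat.cast_one, sum_const, card_univ, Fintype.card_fin, nsmul_eq_mul]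
    field_simp
    linear_combination hr2
  ext j
  induction j using Fin.lastCases with
  | last =>
    simp only [sumZeroEmbedding_apply_last, hsum, centeredStep_apply, not_lt.2 (Fin.le_last _),
      if_false, Fin.val_succ, Nat.cast_add, Nat.cast_one, zero_sub]
    field_simp
    linear_combination hr2
  | cast j =>
    simp only [sumZeroEmbedding_apply_castSucc, hsum, centeredStep_apply, Fin.castSucc_lt_succ_iff,
      Fin.val_succ]
    push_cast
    field_simp
    linear_combination ((i : ℝ) + 1) * (r + 1) ^ 2 * hr2

end sumZeroEmbedding

lemma Fin.sum_Iic_ite_eq {m : ℕ} (a b : ℝ) (i j : Fin m) :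
    ∑ k ∈ Iic i, (if k = j then a else b) = (i + 1) * b + if j ≤ i then a - b else 0 := by
  have hsplit : ∀ k : Fin m, (if k = j then a else b) = b + if k = j then a - b else 0 := by
    intro k; split_ifs <;> ring
  rw [sum_congr rfl fun k _ => hsplit k, sum_add_distrib, Finset.sum_const, Fin.card_Iic,
    sum_ite_eq', if_congr mem_Iic rfl rfl, nsmul_eq_mul]
  push_cast
  ring

lemma smul_partialSum_eq_smul_stair {m : ℕ} {a b c s κ : ℝ} (hab : c * (a - b) = s)
    (hb : c * b = -s / κ) (i : Fin m) :
    c • (WithLp.toLp 2 fun j => ∑ k ∈ Iic i, if k = j then a else b : EuclideanSpace ℝ (Fin m)) =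
      s • WithLp.toLp 2 fun j => (if j ≤ i then 1 else 0) - (i + 1 : ℝ) / κ := by
  ext j
  simp only [PiLp.smul_apply, smul_eq_mul, Fin.sum_Iic_ite_eq]
  split_ifs
  · linear_combination ((i : ℝ) + 1) * hb + hab
  · linear_combination ((i : ℝ) + 1) * hb

lemma regularSimplex_scaled_coeffs {m : ℕ} (hm : 0 < m) {t w' b' a' c : ℝ} (ht : 0 ≤ t)
    (hw' : w' = 1 / m) (hb' : b' = (√(1 - w' * (m - 1)) - √(1 + w')) / m)
    (ha' : a' = b' + √(1 + w')) (hc : c = √(m * t / (m + 1))) :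
    c * (a' - b') = √t ∧ c * b' = -√t / (√(m + 1) * (√(m + 1) + 1)) := by
  have hm' : (0 : ℝ) < m := Nat.cast_pos.2 hm
  have hdiag : c * √(1 + w') = √t := by
    rw [hc, hw', ← Real.sqrt_mul (by positivity)]
    congr 1
    field_simp
  have hoff : c * √(1 - w' * (m - 1)) = √t / √(m + 1) := by
    rw [hc, hw', ← Real.sqrt_mul (by positivity), ← Real.sqrt_div' _ (by positivity)]
    congr 1
    field_simp
    ring
  refine ⟨by rw [ha', add_sub_cancel_left, hdiag], ?_⟩
  have hr2 : √((m : ℝ) + 1) ^ 2 = m + 1 := Real.sq_sqrt (by positivity)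
  have hr : 0 < √((m : ℝ) + 1) := by positivity
  rw [hb', mul_div_assoc', mul_sub, hdiag, hoff]
  field_simp
  linear_combination -√t * hr2

lemma LinearMap.image_smul_convexHull_insert_zero {𝕜 E F : Type*} [Field 𝕜] [LinearOrder 𝕜]
    [IsStrictOrderedRing 𝕜] [AddCommGroup E] [Module 𝕜 E] [AddCommGroup F] [Module 𝕜 F]
    (f : E →ₗ[𝕜] F) (c : 𝕜) {m : ℕ} (p : Fin m → E) (q : Fin (m + 1) → F) (h0 : q 0 = 0)
    (hp : ∀ i, f (c • p i) = q i.succ) :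
    f '' (c • convexHull 𝕜 (insert 0 (Set.range p))) = convexHull 𝕜 (Set.range q) := by
  rw [← convexHull_smul, f.image_convexHull, Set.smul_set_insert, smul_zero, Set.image_insert_eq,
    map_zero, Set.smul_set_range, ← Set.range_comp, Fin.range_fin_succ, h0]
  congr
  exact funext hp

theorem schobi_cross_section
    (n : ℕ) (hn : 2 ≤ n) (w : ℝ) (hw1 : -1 < w)
    (Ω : Set (EuclideanSpace ℝ (Fin n)))
    (hΩ : Ω = {x : EuclideanSpace ℝ (Fin n) |
      (∀ i j : Fin n, i ≤ j → x j ≤ x i) ∧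
      x ⟨0, by omega⟩ - Real.sqrt (1 + w) ≤ x ⟨n - 1, by omega⟩})
    (q : Fin n → EuclideanSpace ℝ (Fin n))
    (hq : ∀ (k : Fin n) (j : Fin n),
      q k j = Real.sqrt (w + 1) *
        (if (j : ℕ) < (k : ℕ) then ((n : ℝ) - (k : ℕ)) / n else -((k : ℕ) : ℝ) / n))
    -- the simplex P_{n-1} = Q_{n-1}(1/(n-1)) in its standard realization
    (w' b' a' : ℝ) (hw' : w' = 1 / ((n : ℝ) - 1))
    (hb' : b' = (Real.sqrt (1 - w' * (((n : ℝ) - 1) - 1)) - Real.sqrt (1 + w')) / ((n : ℝ) - 1))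
    (ha' : a' = b' + Real.sqrt (1 + w'))
    (v' : Fin (n - 1) → Fin (n - 1) → ℝ)
    (hv' : ∀ i j, v' i j = if i = j then a' else b')
    (P : Set (EuclideanSpace ℝ (Fin (n - 1))))
    (hP : P = convexHull ℝ (insert (0 : EuclideanSpace ℝ (Fin (n - 1)))
      (Set.range (fun i : Fin (n - 1) =>
        (WithLp.toLp 2 (fun j => ∑ k ∈ Finset.Iic i, v' k j) : EuclideanSpace ℝ (Fin (n - 1)))))))
    (c : ℝ) (hc : c = Real.sqrt (((n : ℝ) - 1) * (w + 1) / n)) :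
    (Ω ∩ {x : EuclideanSpace ℝ (Fin n) | (∑ i, x i) = 0}) = convexHull ℝ (Set.range q) ∧
    ∃ f : EuclideanSpace ℝ (Fin (n - 1)) → EuclideanSpace ℝ (Fin n),
      Isometry f ∧ f '' (c • P) = convexHull ℝ (Set.range q) := by
  obtain ⟨m, rfl⟩ : ∃ m, n = m + 1 := ⟨n - 1, by omega⟩
  have hs : 0 < √(w + 1) := Real.sqrt_pos.2 (by linarith)
  have hq_eq : q = fun k => √(w + 1) • centeredStep (m + 1) k := by
    funext k
    ext j
    rw [hq, PiLp.smul_apply, smul_eq_mul, centeredStep_apply]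
    by_cases h : j < k
    · rw [if_pos (Fin.lt_def.1 h), if_pos h]
      field_simp
    · rw [if_neg (mt Fin.lt_def.2 h), if_neg h]
      ring
  have hsection : Ω ∩ {x | ∑ i, x i = 0} = prismSection m √(w + 1) := by
    subst hΩ
    ext x
    simp only [prismSection, add_comm 1 w, Set.mem_inter_iff, Set.mem_ofPred_eq, and_assoc]
    rfl
  refine ⟨by rw [hsection, hq_eq, prismSection_eq_convexHull hs], sumZeroEmbedding m,
    isometry_sumZeroEmbedding, ?_⟩
  have hm1 : ((m + 1 : ℕ) : ℝ) - 1 = m := by push_cast; ring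
  rw [hm1] at hw' hb' hc
  push_cast at hc
  obtain ⟨hab, hb⟩ := regularSimplex_scaled_coeffs (by omega) (by linarith) hw' hb' ha' hc
  simp only [hv'] at hP
  rw [hP]
  refine LinearMap.image_smul_convexHull_insert_zero _ _ _ _ (by simp [hq_eq])
    fun (i : Fin m) => ?_
  rw [smul_partialSum_eq_smul_stair hab hb, map_smul, hq_eq]
  exact congrArg _ (sumZeroEmbedding_stair i)
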